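/- arXiv:0811.3975 — 2 statements merged into one kernel-verified Lean document; each statement's English description precedes it below -/
import Mathlib

section
/- Every support L belonging to the greatest fixpoint 𝓛_∞ of the operator Φ is surely winning for player 2. -/
open scoped Classical

noncomputable section

/-- A probability distribution on a finite type, given by a nonnegative
real-valued density summing to `1`. -/
structure FDist (X : Type*) [Fintype X] where
  f : X → ℝ
  nonneg : ∀ x, 0 ≤ f x
  sum_one : ∑ x, f x = 1

/-- The support of a distribution: the set of points with positive probability. -/
def FDist.support {X : Type*} [Fintype X] (δ : FDist X) : Finset X :=
  Finset.univ.filter fun x => 0 < δ.f x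

/-- The uniform distribution on a nonempty finite set. -/
def uniform {X : Type*} [Fintype X] (L : Finset X) (hL : L.Nonempty) : FDist X where
  f x := if x ∈ L then (L.card : ℝ)⁻¹ else 0
  nonneg x := by split_ifs <;> positivity
  sum_one := by
    rw [Finset.sum_ite_mem, Finset.univ_inter, Finset.sum_const, nsmul_eq_mul,
      mul_inv_cancel₀]
    exact_mod_cast (Finset.card_pos.mpr hL).ne'

/-- Uniform distribution on `L`, defaulting to the uniform distribution on the
whole type when `L` is empty. -/
def uniformD {X : Type*} [Fintype X] [Nonempty X] (L : Finset X) : FDist X :=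
  if h : L.Nonempty then uniform L h else uniform Finset.univ Finset.univ_nonempty

/-- The Dirac distribution on a point. -/
def dirac {X : Type*} [Fintype X] (x : X) : FDist X where
  f y := if y = x then 1 else 0
  nonneg y := by by_cases h : y = x <;> simp [h]
  sum_one := by simp

/-- A stochastic game with partial observation on both sides and a reachability
objective for player 1: states `K`, actions `I`, `J`, signals `C`, `D`, target
states `T`, transition probabilities `p`, and actions encoded in signals via
`act₁`, `act₂`. -/
structure Game (K I J C D : Type*) [Fintype K] [Fintype I] [Fintype J] [Fintype C] [Fintype D] where
  T : Finset K
  p : K → I → J → C × D × K → ℝ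
  p_nonneg : ∀ k i j x, 0 ≤ p k i j x
  p_sum : ∀ k i j, ∑ x : C × D × K, p k i j x = 1
  act₁ : C → I
  act₂ : D → J
  act_compat : ∀ k i j c d l, 0 < p k i j (c, d, l) → i = act₁ c ∧ j = act₂ d

/-- A (behavioral) strategy of player 1: a distribution on actions for each
finite sequence of received signals. -/
abbrev Strategy1 (I C : Type*) [Fintype I] : Type _ := List C → FDist I

/-- A (behavioral) strategy of player 2. -/
abbrev Strategy2 (J D : Type*) [Fintype J] : Type _ := List D → FDist J

/-- A play with `n+1` states: the initial state followed by `n` steps, each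
consisting of a signal for player 1, a signal for player 2 and the next state. -/
structure Hist (K C D : Type*) (n : ℕ) where
  first : K
  steps : Fin n → C × D × K

instance (K C D : Type*) [Fintype K] [Fintype C] [Fintype D] (n : ℕ) :
    Fintype (Hist K C D n) :=
  Fintype.ofEquiv (K × (Fin n → C × D × K))
    { toFun := fun x => ⟨x.1, x.2⟩
      invFun := fun h => (h.first, h.steps)
      left_inv := fun _ => rfl
      right_inv := fun _ => rfl }

namespace Hist

variable {K C D : Type*}

/-- The last state of a play. -/
def last : ∀ {n : ℕ}, Hist K C D n → K
  | 0, h => h.first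
  | n + 1, h => (h.steps (Fin.last n)).2.2

/-- The play obtained by removing the last step. -/
def init {n : ℕ} (h : Hist K C D (n + 1)) : Hist K C D n :=
  ⟨h.first, fun m => h.steps m.castSucc⟩

/-- The `m`-th state of a play, `0`-indexed: `state h 0` is the initial state
(called `k₁` in `1`-indexed notation). -/
def state {n : ℕ} (h : Hist K C D n) (m : Fin (n + 1)) : K :=
  if hm : m.val = 0 then h.first
  else (h.steps ⟨m.val - 1, by have := m.isLt; omega⟩).2.2

/-- The sequence of signals received by player 1 along the play. -/
def sig1 {n : ℕ} (h : Hist K C D n) : List C := List.ofFn fun m => (h.steps m).1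

/-- The sequence of signals received by player 2 along the play. -/
def sig2 {n : ℕ} (h : Hist K C D n) : List D := List.ofFn fun m => (h.steps m).2.1

/-- The play visits the target set `T`. -/
def visits (T : Finset K) {n : ℕ} (h : Hist K C D n) : Prop :=
  ∃ m : Fin (n + 1), h.state m ∈ T

end Hist

namespace Game

variable {K I J C D : Type*} [Fintype K] [Fintype I] [Fintype J] [Fintype C] [Fintype D]

/-- The probability of a given play of `n` steps, under initial distribution `δ`
and strategies `σ`, `τ`. -/
def playProb (G : Game K I J C D) (δ : FDist K) (σ : Strategy1 I C) (τ : Strategy2 J D) :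
    ∀ n : ℕ, Hist K C D n → ℝ
  | 0, h => δ.f h.first
  | n + 1, h =>
      G.playProb δ σ τ n h.init *
        ∑ i : I, ∑ j : J,
          (σ h.init.sig1).f i * (τ h.init.sig2).f j *
            G.p h.init.last i j (h.steps (Fin.last n))

/-- The probability that a play with `n+1` states visits the target set. -/
def reachProb (G : Game K I J C D) (δ : FDist K) (σ : Strategy1 I C)
    (τ : Strategy2 J D) (n : ℕ) : ℝ :=
  ∑ h : Hist K C D n, if h.visits G.T then G.playProb δ σ τ n h else 0

/-- The reachability probability `γ₁(δ,σ,τ)`: the supremum over horizons of the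
probability that the play visits the target set. -/
def val (G : Game K I J C D) (δ : FDist K) (σ : Strategy1 I C) (τ : Strategy2 J D) : ℝ :=
  ⨆ n : ℕ, G.reachProb δ σ τ n

/-- `δ` is almost-surely winning for player 1. -/
def AlmostSureWin1 (G : Game K I J C D) (δ : FDist K) : Prop :=
  ∃ σ, ∀ τ, G.val δ σ τ = 1

/-- `δ` is positively winning for player 1. -/
def PositiveWin1 (G : Game K I J C D) (δ : FDist K) : Prop :=
  ∃ σ, ∀ τ, 0 < G.val δ σ τ

/-- `δ` is positively winning for player 2. -/
def PositiveWin2 (G : Game K I J C D) (δ : FDist K) : Prop :=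
  ∃ τ, ∀ σ, G.val δ σ τ < 1

/-- `δ` is surely (equivalently here, almost-surely) winning for player 2. -/
def SureWin2 (G : Game K I J C D) (δ : FDist K) : Prop :=
  ∃ τ, ∀ σ, G.val δ σ τ = 0

/-- One-step belief operator of player 1. -/
def B1 (G : Game K I J C D) (L : Finset K) (c : C) : Finset K :=
  Finset.univ.filter fun k => ∃ l ∈ L, ∃ d : D, 0 < G.p l (G.act₁ c) (G.act₂ d) (c, d, k)

/-- One-step belief operator of player 2. -/
def B2 (G : Game K I J C D) (L : Finset K) (d : D) : Finset K :=
  Finset.univ.filter fun k => ∃ l ∈ L, ∃ c : C, 0 < G.p l (G.act₁ c) (G.act₂ d) (c, d, k)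

/-- Belief of player 1 after a sequence of signals. -/
def B1seq (G : Game K I J C D) (L : Finset K) (cs : List C) : Finset K := cs.foldl G.B1 L

/-- Belief of player 2 after a sequence of signals. -/
def B2seq (G : Game K I J C D) (L : Finset K) (ds : List D) : Finset K := ds.foldl G.B2 L

/-- One-step pessimistic belief operator of player 1. -/
def B1p (G : Game K I J C D) (L : Finset K) (c : C) : Finset K := G.B1 (L \ G.T) c

/-- One-step pessimistic belief operator of player 2. -/
def B2p (G : Game K I J C D) (L : Finset K) (d : D) : Finset K := G.B2 (L \ G.T) d

/-- Pessimistic belief of player 1 after a sequence of signals. -/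
def B1pseq (G : Game K I J C D) (L : Finset K) (cs : List C) : Finset K := cs.foldl G.B1p L

/-- Pessimistic belief of player 2 after a sequence of signals. -/
def B2pseq (G : Game K I J C D) (L : Finset K) (ds : List D) : Finset K := ds.foldl G.B2p L

/-- The operator `Φ` on collections of subsets of `K ∖ T`. -/
def Phi (G : Game K I J C D) (𝓛 : Set (Finset K)) : Set (Finset K) :=
  {L | L ∈ 𝓛 ∧ L ∩ G.T = ∅ ∧ ∃ j : J, ∀ d : D, G.act₂ d = j → G.B2 L d ∈ 𝓛}

theorem Phi_mono (G : Game K I J C D) : Monotone G.Phi := by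
  intro A B hAB L hL
  obtain ⟨h1, h2, j, hj⟩ := hL
  exact ⟨hAB h1, h2, j, fun d hd => hAB (hj d hd)⟩

/-- `𝓛_∞`, the greatest fixpoint of `Φ`. -/
def Linf (G : Game K I J C D) : Set (Finset K) :=
  OrderHom.gfp ⟨G.Phi, G.Phi_mono⟩

/-- The winning condition of the `𝓛`-game for player 1, on a play with initial
support `L`: some state `k_m` is a target state and all earlier pessimistic
beliefs of player 1 avoid `𝓛`. -/
def LWin (G : Game K I J C D) (𝓛 : Set (Finset K)) (L : Finset K) {n : ℕ}
    (h : Hist K C D n) : Prop :=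
  ∃ m : Fin (n + 1), h.state m ∈ G.T ∧
    ∀ r : ℕ, 1 ≤ r → r ≤ m.val → G.B1pseq L (h.sig1.take r) ∉ 𝓛

/-- The payoff `γ₁^𝓛(δ,σ,τ)` of player 1 in the `𝓛`-game, for an initial
distribution `δ` with support `L`. -/
def Lval (G : Game K I J C D) (𝓛 : Set (Finset K)) (L : Finset K) (δ : FDist K)
    (σ : Strategy1 I C) (τ : Strategy2 J D) : ℝ :=
  ⨆ n : ℕ, ∑ h : Hist K C D n, if G.LWin 𝓛 L h then G.playProb δ σ τ n h else 0

end Game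

/-- The uniformly random strategy `σ_R` of player 1. -/
def randomStrat (I C : Type*) [Fintype I] [Nonempty I] : Strategy1 I C :=
  fun _ => uniform Finset.univ Finset.univ_nonempty

/-! Player 2 tracks her belief, the iterated `B₂` of the initial support along her signals, and
while it lies in a collection `𝓛 ⊆ Φ(𝓛)` plays an action witnessing its membership in `Φ(𝓛)`.
Then the next belief is again in `𝓛`, and the current state always lies in the current belief;
as the members of `𝓛` avoid `T`, no play of positive probability visits `T`. The greatest
fixpoint `𝓛_∞` is such a collection. -/

theorem mem_of_uniform_f_ne_zero {X : Type*} [Fintype X] {L : Finset X} {hL : L.Nonempty}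
    {x : X} (hx : (uniform L hL).f x ≠ 0) : x ∈ L := by
  by_contra hxL
  exact hx (by simp [uniform, hxL])

theorem eq_of_dirac_f_ne_zero {X : Type*} [Fintype X] {x y : X} (hy : (dirac x).f y ≠ 0) :
    y = x := by
  by_contra hyx
  exact hy (by simp [dirac, hyx])

namespace Hist

variable {K C D : Type*}

theorem state_castSucc {n : ℕ} (h : Hist K C D (n + 1)) (m : Fin (n + 1)) :
    h.state m.castSucc = h.init.state m := by
  by_cases hm : (m : ℕ) = 0
  · simp [state, init, hm]
  · simp only [state, init, Fin.val_castSucc, dif_neg hm]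
    rfl

theorem state_last : ∀ {n : ℕ} (h : Hist K C D n), h.state (Fin.last n) = h.last
  | 0, _ => rfl
  | n + 1, h => by simp [state, last]; rfl

theorem visits_zero (T : Finset K) (h : Hist K C D 0) : h.visits T ↔ h.last ∈ T := by
  simp [visits, state, last]

theorem visits_succ (T : Finset K) {n : ℕ} (h : Hist K C D (n + 1)) :
    h.visits T ↔ h.init.visits T ∨ h.last ∈ T := by
  simp only [visits, Fin.exists_fin_succ', state_castSucc, state_last]

theorem sig2_succ {n : ℕ} (h : Hist K C D (n + 1)) :
    h.sig2 = h.init.sig2 ++ [(h.steps (Fin.last n)).2.1] := by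
  rw [sig2, List.ofFn_succ', List.concat_eq_append]
  rfl

end Hist

namespace Game

variable {K I J C D : Type*} [Fintype K] [Fintype I] [Fintype J] [Fintype C] [Fintype D]
  (G : Game K I J C D)

theorem B2seq_append_singleton (L : Finset K) (ds : List D) (d : D) :
    G.B2seq L (ds ++ [d]) = G.B2 (G.B2seq L ds) d := by
  simp [B2seq, List.foldl_append]

theorem mem_B2 {S : Finset K} {l k : K} {c : C} {d : D} (hl : l ∈ S)
    (hp : 0 < G.p l (G.act₁ c) (G.act₂ d) (c, d, k)) : k ∈ G.B2 S d :=
  Finset.mem_filter.mpr ⟨Finset.mem_univ _, l, hl, c, hp⟩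

theorem playProb_succ_ne_zero {δ : FDist K} {σ : Strategy1 I C} {τ : Strategy2 J D} {n : ℕ}
    {h : Hist K C D (n + 1)} (hp : G.playProb δ σ τ (n + 1) h ≠ 0) :
    G.playProb δ σ τ n h.init ≠ 0 ∧
      (τ h.init.sig2).f (G.act₂ (h.steps (Fin.last n)).2.1) ≠ 0 ∧
      0 < G.p h.init.last (G.act₁ (h.steps (Fin.last n)).1)
        (G.act₂ (h.steps (Fin.last n)).2.1) (h.steps (Fin.last n)) := by
  obtain ⟨hinit, hstep⟩ := mul_ne_zero_iff.mp hp
  obtain ⟨i, -, hi⟩ := Finset.exists_ne_zero_of_sum_ne_zero hstep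
  obtain ⟨j, -, hij⟩ := Finset.exists_ne_zero_of_sum_ne_zero hi
  obtain ⟨hστ, hpij⟩ := mul_ne_zero_iff.mp hij
  have hj := (mul_ne_zero_iff.mp hστ).2
  have hpos := (G.p_nonneg _ _ _ _).lt_of_ne' hpij
  obtain ⟨rfl, rfl⟩ := G.act_compat _ _ _ _ _ _ hpos
  exact ⟨hinit, hj, hpos⟩

def beliefStrategy (L : Finset K) (a : Finset K → J) : Strategy2 J D :=
  fun ds => dirac (a (G.B2seq L ds))

variable {G}

theorem belief_mem_and_last_mem {𝓛 : Set (Finset K)} {a : Finset K → J}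
    (ha : ∀ S ∈ 𝓛, ∀ d, G.act₂ d = a S → G.B2 S d ∈ 𝓛) {L : Finset K} (hL : L ∈ 𝓛)
    {δ : FDist K} (hδ : ∀ k, δ.f k ≠ 0 → k ∈ L) (σ : Strategy1 I C) :
    ∀ (n : ℕ) (h : Hist K C D n), G.playProb δ σ (G.beliefStrategy L a) n h ≠ 0 →
      G.B2seq L h.sig2 ∈ 𝓛 ∧ h.last ∈ G.B2seq L h.sig2
  | 0, h, hp => ⟨hL, hδ _ hp⟩
  | n + 1, h, hp => by
    obtain ⟨hinit, hτ, hstep⟩ := G.playProb_succ_ne_zero hp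
    obtain ⟨hS, hlast⟩ := belief_mem_and_last_mem ha hL hδ σ n h.init hinit
    have hd := eq_of_dirac_f_ne_zero hτ
    rw [h.sig2_succ, B2seq_append_singleton]
    exact ⟨ha _ hS _ hd, G.mem_B2 hlast hstep⟩

theorem not_visits_of_playProb_ne_zero {𝓛 : Set (Finset K)} (h𝓛 : ∀ S ∈ 𝓛, S ∩ G.T = ∅)
    {a : Finset K → J} (ha : ∀ S ∈ 𝓛, ∀ d, G.act₂ d = a S → G.B2 S d ∈ 𝓛) {L : Finset K}
    (hL : L ∈ 𝓛) {δ : FDist K} (hδ : ∀ k, δ.f k ≠ 0 → k ∈ L) (σ : Strategy1 I C) :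
    ∀ (n : ℕ) (h : Hist K C D n), G.playProb δ σ (G.beliefStrategy L a) n h ≠ 0 →
      ¬ h.visits G.T := by
  have hsafe : ∀ n (h : Hist K C D n), G.playProb δ σ (G.beliefStrategy L a) n h ≠ 0 →
      h.last ∉ G.T := fun n h hp hT => by
    obtain ⟨hS, hlast⟩ := belief_mem_and_last_mem ha hL hδ σ n h hp
    simpa [h𝓛 _ hS] using Finset.mem_inter.mpr ⟨hlast, hT⟩
  intro n
  induction n with
  | zero =>
    intro h hp
    rw [Hist.visits_zero]
    exact hsafe 0 h hp
  | succ n ih =>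
    intro h hp
    rw [Hist.visits_succ, not_or]
    exact ⟨ih _ (G.playProb_succ_ne_zero hp).1, hsafe _ h hp⟩

theorem sureWin2_of_subset_Phi [Nonempty J] {𝓛 : Set (Finset K)} (h𝓛 : 𝓛 ⊆ G.Phi 𝓛)
    {L : Finset K} (hL : L ∈ 𝓛) {δ : FDist K} (hδ : ∀ k, δ.f k ≠ 0 → k ∈ L) :
    G.SureWin2 δ := by
  have hchoice : ∀ S, ∃ j : J, S ∈ 𝓛 → ∀ d, G.act₂ d = j → G.B2 S d ∈ 𝓛 := fun S => by
    by_cases hS : S ∈ 𝓛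
    · obtain ⟨-, -, j, hj⟩ := h𝓛 hS
      exact ⟨j, fun _ => hj⟩
    · exact ⟨Classical.arbitrary J, fun h => absurd h hS⟩
  choose a ha using hchoice
  refine ⟨G.beliefStrategy L a, fun σ => ?_⟩
  have hreach : ∀ n, G.reachProb δ σ (G.beliefStrategy L a) n = 0 := fun n =>
    Finset.sum_eq_zero fun h _ => ite_eq_right_iff.mpr fun hv => by
      by_contra hp
      exact not_visits_of_playProb_ne_zero (fun S hS => (h𝓛 hS).2.1) ha hL hδ σ n h hp hv
  simp only [val, hreach, ciSup_const]

theorem Linf_subset_Phi : G.Linf ⊆ G.Phi G.Linf :=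
  (OrderHom.map_gfp (⟨G.Phi, G.Phi_mono⟩ : Set (Finset K) →o Set (Finset K))).ge

end Game

variable {K I J C D : Type*} [Fintype K] [Fintype I] [Fintype J] [Fintype C] [Fintype D]
  [Nonempty K] [Nonempty I] [Nonempty J] [Nonempty C] [Nonempty D]

/-- every support in the greatest fixpoint `𝓛_∞` of `Φ` is surely
winning for player 2. -/
theorem gfp_surely_winning2 (G : Game K I J C D) (L : Finset K) (hL : L.Nonempty)
    (hmem : L ∈ G.Linf) :
    G.SureWin2 (uniform L hL) :=
  G.sureWin2_of_subset_Phi G.Linf_subset_Phi hmem fun _ => mem_of_uniform_f_ne_zero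
end
end

section
/- For every support L ⊆ K with L ∉ 𝓛_∞ (the greatest fixpoint of Φ), the uniformly random strategy σ_R of player 1 satisfies γ₁(δ,σ_R,τ) > 0 for every initial distribution δ with support L and every strategy τ of player 2; in particular L is positively winning for player 1. -/
/-!
Call a support blocked if player 2 has one strategy `τ` against which `σ_R` visits `T` with
probability zero from every state of the support. Blocked supports form a post-fixpoint of `Φ`,
hence lie in `𝓛_∞`. A blocked support avoids `T`; and if `τ` plays `j` with positive
probability at the start, then for every signal `d` with `act₂ d = j` the shifted strategy
`τ (d :: ·)` blocks `B₂(L, d)`: since `σ_R` plays every action with positive probability and is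
unchanged by the shift, a play reaching `T` from a state of `B₂(L, d)` would extend backwards
to one reaching `T` from `L`. Outside `𝓛_∞` every `τ` therefore leaves a play from the support
that reaches `T` with positive probability.
-/

open scoped Classical

noncomputable section

namespace FDist

variable {X : Type*} [Fintype X]

theorem mem_support_iff (δ : FDist X) {x : X} : x ∈ δ.support ↔ 0 < δ.f x := by
  simp [FDist.support]

theorem support_uniform (L : Finset X) (hL : L.Nonempty) : (uniform L hL).support = L := by
  ext x
  have hcard : (0 : ℝ) < (L.card : ℝ)⁻¹ := by simpa using hL.card_pos
  by_cases hx : x ∈ L <;> simp [mem_support_iff, uniform, hx, hcard]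

theorem exists_pos (δ : FDist X) : ∃ x, 0 < δ.f x := by
  by_contra! h
  have := δ.sum_one
  rw [Finset.sum_eq_zero fun x _ => le_antisymm (h x) (δ.nonneg x)] at this
  exact zero_ne_one this

theorem uniform_univ_pos [Nonempty X] (x : X) :
    0 < (uniform Finset.univ Finset.univ_nonempty).f x := by
  simp [uniform, Fintype.card_pos]

theorem dirac_pos_iff {x y : X} : 0 < (dirac x).f y ↔ y = x := by
  by_cases h : y = x <;> simp [dirac, h]

end FDist

namespace Hist

variable {K C D : Type*} {n : ℕ}

theorem ext {h g : Hist K C D n} (hfirst : h.first = g.first) (hsteps : h.steps = g.steps) :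
    h = g := by
  cases h; cases g; cases hfirst; cases hsteps; rfl

def snoc (h : Hist K C D n) (x : C × D × K) : Hist K C D (n + 1) :=
  ⟨h.first, Fin.snoc h.steps x⟩

@[simp]
theorem init_snoc (h : Hist K C D n) (x : C × D × K) : (h.snoc x).init = h :=
  Hist.ext rfl (funext fun _ => Fin.snoc_castSucc (α := fun _ => C × D × K) ..)

@[simp]
theorem snoc_steps_last (h : Hist K C D n) (x : C × D × K) :
    (h.snoc x).steps (Fin.last n) = x :=
  Fin.snoc_last (α := fun _ => C × D × K) ..

def snocEquiv (n : ℕ) : Hist K C D n × (C × D × K) ≃ Hist K C D (n + 1) where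
  toFun p := p.1.snoc p.2
  invFun h := (h.init, h.steps (Fin.last n))
  left_inv p := by simp
  right_inv h := Hist.ext rfl (Fin.snoc_init_self h.steps)

/-- The play starting at `l` whose first step is `x`; it continues `h` only if
`x.2.2 = h.first`. -/
def cons (l : K) (x : C × D × K) (h : Hist K C D n) : Hist K C D (n + 1) :=
  ⟨l, Fin.cons x h.steps⟩

theorem init_cons (l : K) (x : C × D × K) (h : Hist K C D (n + 1)) :
    (h.cons l x).init = h.init.cons l x := by
  refine Hist.ext rfl (funext fun m => ?_)
  cases m using Fin.cases <;> simp [cons, init]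

theorem sig1_cons (l : K) (x : C × D × K) (h : Hist K C D n) :
    (h.cons l x).sig1 = x.1 :: h.sig1 := by
  simp [cons, sig1, List.ofFn_succ]

theorem sig2_cons (l : K) (x : C × D × K) (h : Hist K C D n) :
    (h.cons l x).sig2 = x.2.1 :: h.sig2 := by
  simp [cons, sig2, List.ofFn_succ]

theorem last_cons (l : K) (x : C × D × K) (h : Hist K C D n) (hx : h.first = x.2.2) :
    (h.cons l x).last = h.last := by
  cases n with
  | zero => exact hx.symm
  | succ n => simp [cons, last]

theorem state_cons_succ (l : K) (x : C × D × K) (h : Hist K C D n) (hx : h.first = x.2.2)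
    (m : Fin (n + 1)) : (h.cons l x).state m.succ = h.state m := by
  cases m using Fin.cases with
  | zero => simp [state, cons, hx]
  | succ m =>
    simp only [state, cons, Fin.val_succ, Nat.add_sub_cancel, dite_false, Nat.add_one_ne_zero]
    exact congrArg (fun y : C × D × K => y.2.2)
      (Fin.cons_succ (α := fun _ => C × D × K) x h.steps m)

theorem visits_cons {T : Finset K} (l : K) (x : C × D × K) {h : Hist K C D n}
    (hx : h.first = x.2.2) (hT : h.visits T) : (h.cons l x).visits T := by
  obtain ⟨m, hm⟩ := hT
  exact ⟨m.succ, by rwa [state_cons_succ l x h hx]⟩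

end Hist

namespace Game

variable {K I J C D : Type*} [Fintype K] [Fintype I] [Fintype J] [Fintype C] [Fintype D]
  (G : Game K I J C D)

def stepProb (α : FDist I) (β : FDist J) (k : K) (x : C × D × K) : ℝ :=
  ∑ i, ∑ j, α.f i * β.f j * G.p k i j x

theorem stepProb_nonneg (α : FDist I) (β : FDist J) (k : K) (x : C × D × K) :
    0 ≤ G.stepProb α β k x :=
  Finset.sum_nonneg fun _ _ => Finset.sum_nonneg fun _ _ =>
    mul_nonneg (mul_nonneg (α.nonneg _) (β.nonneg _)) (G.p_nonneg ..)

theorem sum_stepProb (α : FDist I) (β : FDist J) (k : K) : ∑ x, G.stepProb α β k x = 1 := by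
  calc ∑ x, G.stepProb α β k x = ∑ i, ∑ j, α.f i * β.f j * ∑ x, G.p k i j x := by
        simp only [stepProb, Finset.mul_sum]
        rw [Finset.sum_comm]
        exact Finset.sum_congr rfl fun _ _ => Finset.sum_comm
    _ = 1 := by simp [G.p_sum, ← Fintype.sum_mul_sum, α.sum_one, β.sum_one]

theorem stepProb_pos {α : FDist I} {β : FDist J} {k l : K} {c : C} {d : D}
    (hα : 0 < α.f (G.act₁ c)) (hβ : 0 < β.f (G.act₂ d))
    (hp : 0 < G.p k (G.act₁ c) (G.act₂ d) (c, d, l)) : 0 < G.stepProb α β k (c, d, l) :=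
  Finset.sum_pos' (fun _ _ => Finset.sum_nonneg fun _ _ =>
      mul_nonneg (mul_nonneg (α.nonneg _) (β.nonneg _)) (G.p_nonneg ..))
    ⟨_, Finset.mem_univ _, Finset.sum_pos' (fun _ _ =>
      mul_nonneg (mul_nonneg (α.nonneg _) (β.nonneg _)) (G.p_nonneg ..))
    ⟨_, Finset.mem_univ _, mul_pos (mul_pos hα hβ) hp⟩⟩

section

variable (δ : FDist K) (σ : Strategy1 I C) (τ : Strategy2 J D)

theorem playProb_succ {n : ℕ} (h : Hist K C D (n + 1)) :
    G.playProb δ σ τ (n + 1) h = G.playProb δ σ τ n h.init *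
      G.stepProb (σ h.init.sig1) (τ h.init.sig2) h.init.last (h.steps (Fin.last n)) :=
  rfl

theorem playProb_nonneg : ∀ (n : ℕ) (h : Hist K C D n), 0 ≤ G.playProb δ σ τ n h
  | 0, _ => δ.nonneg _
  | n + 1, h => mul_nonneg (playProb_nonneg n h.init) (G.stepProb_nonneg ..)

theorem sum_playProb : ∀ n : ℕ, ∑ h : Hist K C D n, G.playProb δ σ τ n h = 1
  | 0 => by
    rw [← δ.sum_one]
    exact Fintype.sum_equiv
      ⟨Hist.first, (⟨·, finZeroElim⟩), fun _ => Hist.ext rfl (funext finZeroElim), fun _ => rfl⟩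
      _ _ fun _ => rfl
  | n + 1 => by
    rw [← Fintype.sum_equiv (Hist.snocEquiv n) _ _ fun _ => rfl, Fintype.sum_prod_type]
    simp [Hist.snocEquiv, playProb_succ, ← Finset.mul_sum, sum_stepProb, sum_playProb n]

theorem reachProb_le_one (n : ℕ) : G.reachProb δ σ τ n ≤ 1 :=
  calc G.reachProb δ σ τ n ≤ ∑ h : Hist K C D n, G.playProb δ σ τ n h :=
        Finset.sum_le_sum fun h _ => by
          split_ifs
          exacts [le_rfl, G.playProb_nonneg δ σ τ n h]
    _ = 1 := G.sum_playProb δ σ τ n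

theorem val_pos_of_playProb_pos {n : ℕ} {h : Hist K C D n} (hT : h.visits G.T)
    (hpos : 0 < G.playProb δ σ τ n h) : 0 < G.val δ σ τ := by
  have hreach : 0 < G.reachProb δ σ τ n :=
    calc 0 < G.playProb δ σ τ n h := hpos
      _ = if h.visits G.T then G.playProb δ σ τ n h else 0 := (if_pos hT).symm
      _ ≤ G.reachProb δ σ τ n :=
        Finset.single_le_sum (f := fun h => if h.visits G.T then G.playProb δ σ τ n h else 0)
          (fun h _ => by split_ifs; exacts [G.playProb_nonneg δ σ τ n h, le_rfl])
          (Finset.mem_univ h)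
  exact hreach.trans_le <| le_ciSup ⟨1, Set.forall_mem_range.2 (G.reachProb_le_one δ σ τ)⟩ n

theorem playProb_eq_mul_dirac : ∀ (n : ℕ) (h : Hist K C D n),
    G.playProb δ σ τ n h = δ.f h.first * G.playProb (dirac h.first) σ τ n h
  | 0, h => by simp [playProb, dirac]
  | n + 1, h => by
    rw [playProb_succ, playProb_succ, playProb_eq_mul_dirac n h.init, mul_assoc]
    rfl

theorem playProb_cons : ∀ (n : ℕ) (h : Hist K C D n) (l : K) (x : C × D × K),
    h.first = x.2.2 →
    G.playProb δ σ τ (n + 1) (h.cons l x) =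
      δ.f l * G.stepProb (σ []) (τ []) l x *
        G.playProb (dirac x.2.2) (fun cs => σ (x.1 :: cs)) (fun ds => τ (x.2.1 :: ds)) n h
  | 0, h, l, x, hx => by
    have hdirac : (dirac x.2.2).f h.first = 1 := by simp [dirac, hx]
    rw [playProb, hdirac, mul_one]
    rfl
  | n + 1, h, l, x, hx => by
    rw [playProb_succ, Hist.init_cons, playProb_cons n h.init l x hx, playProb_succ,
      Hist.sig1_cons, Hist.sig2_cons, Hist.last_cons l x h.init hx]
    simp only [Hist.cons, Hist.init, Fin.cons_last]
    ring

end

def Reaches (σ : Strategy1 I C) (τ : Strategy2 J D) (k : K) : Prop :=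
  ∃ (n : ℕ) (h : Hist K C D n), h.visits G.T ∧ 0 < G.playProb (dirac k) σ τ n h

theorem first_eq_of_playProb_dirac_pos {σ : Strategy1 I C} {τ : Strategy2 J D} {k : K} {n : ℕ}
    {h : Hist K C D n} (hpos : 0 < G.playProb (dirac k) σ τ n h) : h.first = k := by
  rw [playProb_eq_mul_dirac] at hpos
  exact FDist.dirac_pos_iff.1 (pos_of_mul_pos_left hpos (G.playProb_nonneg ..))

theorem val_pos_of_reaches {δ : FDist K} {σ : Strategy1 I C} {τ : Strategy2 J D} {k : K}
    (hk : k ∈ δ.support) (hreach : G.Reaches σ τ k) : 0 < G.val δ σ τ := by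
  obtain ⟨n, h, hT, hpos⟩ := hreach
  refine G.val_pos_of_playProb_pos δ σ τ hT ?_
  rw [playProb_eq_mul_dirac, G.first_eq_of_playProb_dirac_pos hpos]
  exact mul_pos ((FDist.mem_support_iff δ).1 hk) hpos

variable [Nonempty I]

theorem reaches_of_mem_target (τ : Strategy2 J D) {k : K} (hk : k ∈ G.T) :
    G.Reaches (randomStrat I C) τ k :=
  ⟨0, ⟨k, finZeroElim⟩, ⟨0, hk⟩, by simp [playProb, dirac]⟩

theorem reaches_of_step {τ : Strategy2 J D} {l k : K} {c : C} {d : D}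
    (hτ : 0 < (τ []).f (G.act₂ d)) (hp : 0 < G.p l (G.act₁ c) (G.act₂ d) (c, d, k))
    (hreach : G.Reaches (randomStrat I C) (fun ds => τ (d :: ds)) k) :
    G.Reaches (randomStrat I C) τ l := by
  obtain ⟨n, h, hT, hpos⟩ := hreach
  have hfirst := G.first_eq_of_playProb_dirac_pos hpos
  refine ⟨n + 1, h.cons l (c, d, k), Hist.visits_cons l _ hfirst hT, ?_⟩
  rw [G.playProb_cons _ _ _ n h l (c, d, k) hfirst]
  refine mul_pos (mul_pos (FDist.dirac_pos_iff.2 rfl) ?_) hpos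
  exact G.stepProb_pos (FDist.uniform_univ_pos _) hτ hp

def blockedByPlayer2 : Set (Finset K) :=
  {M | ∃ τ : Strategy2 J D, ∀ k ∈ M, ¬G.Reaches (randomStrat I C) τ k}

theorem blockedByPlayer2_subset_Phi : G.blockedByPlayer2 ⊆ G.Phi G.blockedByPlayer2 := by
  rintro M ⟨τ, hτ⟩
  obtain ⟨j, hj⟩ := (τ []).exists_pos
  refine ⟨⟨τ, hτ⟩, ?_, j, fun d hd => ⟨fun ds => τ (d :: ds), ?_⟩⟩
  · exact Finset.eq_empty_of_forall_notMem fun k hk =>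
      hτ k (Finset.mem_inter.1 hk).1 (G.reaches_of_mem_target τ (Finset.mem_inter.1 hk).2)
  · intro k hk hreach
    obtain ⟨l, hl, c, hp⟩ := by simpa [B2] using hk
    exact hτ l hl (G.reaches_of_step (hd ▸ hj) hp hreach)

theorem blockedByPlayer2_subset_Linf : G.blockedByPlayer2 ⊆ G.Linf :=
  OrderHom.le_gfp ⟨G.Phi, G.Phi_mono⟩ G.blockedByPlayer2_subset_Phi

theorem exists_reaches_of_notMem_Linf {L : Finset K} (hL : L ∉ G.Linf) (τ : Strategy2 J D) :
    ∃ k ∈ L, G.Reaches (randomStrat I C) τ k := by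
  by_contra! h
  exact hL (G.blockedByPlayer2_subset_Linf ⟨τ, h⟩)

end Game

variable {K I J C D : Type*} [Fintype K] [Fintype I] [Fintype J] [Fintype C] [Fintype D]
  [Nonempty K] [Nonempty I] [Nonempty J] [Nonempty C] [Nonempty D]

/-- from any support outside the greatest fixpoint `𝓛_∞` of `Φ`, the
uniformly random strategy of player 1 wins positively against every strategy of
player 2; in particular the support is positively winning for player 1. -/
theorem not_gfp_positively_winning1 (G : Game K I J C D) (L : Finset K)
    (hL : L.Nonempty) (hnot : L ∉ G.Linf) :
    (∀ δ : FDist K, δ.support = L →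
      ∀ τ : Strategy2 J D, 0 < G.val δ (randomStrat I C) τ) ∧
    G.PositiveWin1 (uniform L hL) := by
  have hwin : ∀ δ : FDist K, δ.support = L →
      ∀ τ : Strategy2 J D, 0 < G.val δ (randomStrat I C) τ := by
    intro δ hδ τ
    obtain ⟨k, hk, hreach⟩ := G.exists_reaches_of_notMem_Linf hnot τ
    exact G.val_pos_of_reaches (hδ ▸ hk) hreach
  exact ⟨hwin, randomStrat I C, hwin _ (FDist.support_uniform L hL)⟩
end
end
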